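/- Let W be a tetrahedral erasure channel and let (W_n)_{n≥0} be any sequence with W_0 = W and W_{n+1} ∈ {W_n^s, W_n^p} for every n. Then there exists a constant C > 0 such that A(W_n) ≤ C/n for all n ≥ 1; in other words, A(W_n) = O(1/n) along every path of descendants. -/

import Mathlib

noncomputable section

/-- A quintuple of reals representing a candidate tetrahedral erasure channel
`W = (p, q, r, s, t)`. -/
structure TECQuint where
  p : ℝ
  q : ℝ
  r : ℝ
  s : ℝ
  t : ℝ

namespace TECQuint

/-- `W` is a tetrahedral erasure channel: all five entries are nonnegative and sum to 1. -/
def IsTEC (W : TECQuint) : Prop :=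
  0 ≤ W.p ∧ 0 ≤ W.q ∧ 0 ≤ W.r ∧ 0 ≤ W.s ∧ 0 ≤ W.t ∧
    W.p + W.q + W.r + W.s + W.t = 1

/-- `W` is balanced: `q = r = s`. -/
def Balanced (W : TECQuint) : Prop := W.q = W.r ∧ W.r = W.s

/-- The serial child `W^s`. -/
def ser (W : TECQuint) : TECQuint where
  p := W.p ^ 2
  q := W.p * W.s + W.s * W.q + W.q * W.p
  r := W.p * W.q + W.q * W.r + W.r * W.p
  s := W.p * W.r + W.r * W.s + W.s * W.p
  t := 1 - (W.p ^ 2 + (W.p * W.s + W.s * W.q + W.q * W.p)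
      + (W.p * W.q + W.q * W.r + W.r * W.p)
      + (W.p * W.r + W.r * W.s + W.s * W.p))

/-- The parallel child `W^p`. -/
def par (W : TECQuint) : TECQuint where
  p := 1 - ((W.t * W.s + W.s * W.q + W.q * W.t)
      + (W.t * W.q + W.q * W.r + W.r * W.t)
      + (W.t * W.r + W.r * W.s + W.s * W.t) + W.t ^ 2)
  q := W.t * W.s + W.s * W.q + W.q * W.t
  r := W.t * W.q + W.q * W.r + W.r * W.t
  s := W.t * W.r + W.r * W.s + W.s * W.t
  t := W.t ^ 2

/-- The moment of inertia `A(W) = (q−r)² + (r−s)² + (s−q)²`. -/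
def inertia (W : TECQuint) : ℝ :=
  (W.q - W.r) ^ 2 + (W.r - W.s) ^ 2 + (W.s - W.q) ^ 2

/-- The (conditional) entropy `H(W) = (q+r+s)/2 + t`. -/
def entropy (W : TECQuint) : ℝ := (W.q + W.r + W.s) / 2 + W.t

/-- The edge mass `E(W) = q + r + s`. -/
def edgeMass (W : TECQuint) : ℝ := W.q + W.r + W.s

/-- The Quetelet index `Q(W) = E(W) / (H(W)(1−H(W)))`. -/
def quetelet (W : TECQuint) : ℝ :=
  edgeMass W / (entropy W * (1 - entropy W))

/-- One step of the channel process: `true` picks the serial child, `false` the parallel child. -/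
def child (W : TECQuint) (b : Bool) : TECQuint := if b then ser W else par W

/-- The descendant `W^c` of `W` along the string `c ∈ {s,p}^n`. -/
def descend : TECQuint → {n : ℕ} → (Fin n → Bool) → TECQuint
  | W, 0, _ => W
  | W, _ + 1, c => descend (child W (c 0)) (fun i => c i.succ)

end TECQuint

open TECQuint

/-!
Write `d₁ = q - r`, `d₂ = r - s`, `d₃ = s - q`, so that `A(W) = Σ dᵢ²`. The serial child has
`A(W^s) = (p+s)² d₁² + (p+q)² d₂² + (p+r)² d₃²`, and since `|d₁| ≤ q + r ≤ 1 - (p+s)` (and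
likewise for `d₂`, `d₃`), each term loses at least `|dᵢ|³`. Hence
`A(W) - A(W^s) ≥ Σ |dᵢ|³ ≥ (A(W)³ / 3)^{1/2}` by the power-mean inequality. Exchanging `p` and `t`
turns the parallel child into the serial one, so the same holds for `W^p`. A nonincreasing
nonnegative sequence with `aₙ³ ≤ 3 (aₙ - aₙ₊₁)²` satisfies `aₙ ≤ 6/n`, by induction on `n`.
-/

lemma sq_mul_sq_le_sq_sub_abs_pow_three {u d : ℝ} (hu : 0 ≤ u) (hd : |d| ≤ 1 - u) :
    u ^ 2 * d ^ 2 ≤ d ^ 2 - |d| ^ 3 := by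
  have hu2 : u ^ 2 ≤ 1 - |d| := by nlinarith [abs_nonneg d]
  have hd3 : |d| ^ 3 = |d| * d ^ 2 := by rw [← sq_abs]; ring
  nlinarith [sq_nonneg d]

/-- The power-mean inequality `M₂ ≤ M₃` for three nonnegative reals. -/
lemma sum_sq_pow_three_le_three_mul_sum_pow_three_sq {x y z : ℝ} (hx : 0 ≤ x) (hy : 0 ≤ y)
    (hz : 0 ≤ z) : (x ^ 2 + y ^ 2 + z ^ 2) ^ 3 ≤ 3 * (x ^ 3 + y ^ 3 + z ^ 3) ^ 2 := by
  have cauchySchwarz : (x ^ 2 + y ^ 2 + z ^ 2) ^ 2 ≤ (x ^ 3 + y ^ 3 + z ^ 3) * (x + y + z) := by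
    nlinarith [mul_nonneg (mul_nonneg hx hy) (sq_nonneg (x - y)),
      mul_nonneg (mul_nonneg hy hz) (sq_nonneg (y - z)),
      mul_nonneg (mul_nonneg hx hz) (sq_nonneg (x - z))]
  have qm_am : (x + y + z) ^ 2 ≤ 3 * (x ^ 2 + y ^ 2 + z ^ 2) := by
    nlinarith [sq_nonneg (x - y), sq_nonneg (y - z), sq_nonneg (x - z)]
  rcases (by positivity : 0 ≤ x ^ 2 + y ^ 2 + z ^ 2).eq_or_lt with h | h
  · rw [← h, zero_pow three_ne_zero]; positivity
  · have := mul_le_mul cauchySchwarz cauchySchwarz (by positivity) (by positivity)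
    nlinarith [mul_le_mul_of_nonneg_left qm_am (sq_nonneg (x ^ 3 + y ^ 3 + z ^ 3))]

lemma le_two_mul_div_of_pow_three_le_mul_sq_sub {a : ℕ → ℝ} {c : ℝ} (hc : 0 < c)
    (ha : ∀ n, 0 ≤ a n) (hanti : ∀ n, a (n + 1) ≤ a n)
    (hstep : ∀ n, a n ^ 3 ≤ c * (a n - a (n + 1)) ^ 2) :
    ∀ n : ℕ, 1 ≤ n → a n ≤ 2 * c / n := by
  have ha0 : a 0 ≤ c := by
    have : a 0 ^ 3 ≤ c * a 0 ^ 2 := (hstep 0).trans (by gcongr <;> linarith [ha 0, ha 1, hanti 0])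
    by_contra! hca
    nlinarith [mul_pos (pow_pos (hc.trans hca) 2) (sub_pos.2 hca)]
  intro n hn
  induction n, hn using Nat.le_induction with
  | base => simpa using (hanti 0).trans (ha0.trans (by linarith))
  | succ n hn ih =>
    by_contra! hlt
    have hx : (1 : ℝ) ≤ n := by exact_mod_cast hn
    push_cast at hlt
    have hdiff : a n - a (n + 1) < 2 * c / (n * (n + 1)) := by
      have : 2 * c / n - 2 * c / (n + 1) = 2 * c / (n * (n + 1)) := by field_simp; ring
      linarith
    have hlow : (2 * c / (n + 1)) ^ 3 < a n ^ 3 := by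
      gcongr
      linarith [hanti n]
    have hup : c * (a n - a (n + 1)) ^ 2 ≤ c * (2 * c / (n * (n + 1))) ^ 2 := by
      gcongr; linarith [hanti n]
    have key : (2 * c / (n + 1)) ^ 3 < c * (2 * c / (n * (n + 1))) ^ 2 :=
      hlow.trans_le ((hstep n).trans hup)
    rw [div_pow, div_pow, mul_div_assoc', div_lt_div_iff₀ (by positivity) (by positivity)] at key
    have : 0 ≤ 2 * (n : ℝ) ^ 2 - (n + 1) := by nlinarith
    nlinarith [mul_nonneg (by positivity : (0 : ℝ) ≤ c ^ 3 * (n + 1) ^ 2) this]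

namespace TECQuint

def swapEnds (W : TECQuint) : TECQuint := ⟨W.t, W.q, W.r, W.s, W.p⟩

lemma IsTEC.swapEnds {W : TECQuint} (h : W.IsTEC) : W.swapEnds.IsTEC := by
  obtain ⟨hp, hq, hr, hs, ht, hsum⟩ := h
  exact ⟨ht, hq, hr, hs, hp, by simp only [TECQuint.swapEnds]; linarith⟩

lemma par_eq_swapEnds_ser_swapEnds (W : TECQuint) : par W = (ser W.swapEnds).swapEnds := by
  simp only [par, ser, swapEnds, mk.injEq, and_true]
  ring

lemma inertia_swapEnds (W : TECQuint) : inertia W.swapEnds = inertia W := rfl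

lemma isTEC_ser {W : TECQuint} (h : W.IsTEC) : (ser W).IsTEC := by
  obtain ⟨hp, hq, hr, hs, ht, hsum⟩ := h
  have hp1 : W.p = 1 - (W.q + W.r + W.s + W.t) := by linarith
  simp only [IsTEC, ser]
  refine ⟨by positivity, by positivity, by positivity, by positivity, ?_, by ring⟩
  rw [hp1]
  nlinarith [mul_nonneg hq hr, mul_nonneg hr hs, mul_nonneg hs hq,
    mul_nonneg ht (add_nonneg (add_nonneg hq hr) hs), sq_nonneg W.t]

lemma isTEC_par {W : TECQuint} (h : W.IsTEC) : (par W).IsTEC := by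
  rw [par_eq_swapEnds_ser_swapEnds]
  exact (isTEC_ser h.swapEnds).swapEnds

lemma inertia_ser (W : TECQuint) :
    inertia (ser W) = (W.p + W.s) ^ 2 * (W.q - W.r) ^ 2 + (W.p + W.q) ^ 2 * (W.r - W.s) ^ 2
      + (W.p + W.r) ^ 2 * (W.s - W.q) ^ 2 := by
  simp only [inertia, ser]
  ring

lemma inertia_nonneg (W : TECQuint) : 0 ≤ inertia W := by
  unfold inertia
  positivity

lemma inertia_ser_add_sum_abs_pow_three_le {W : TECQuint} (h : W.IsTEC) :
    inertia (ser W) + (|W.q - W.r| ^ 3 + |W.r - W.s| ^ 3 + |W.s - W.q| ^ 3) ≤ inertia W := by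
  obtain ⟨hp, hq, hr, hs, ht, hsum⟩ := h
  have hqr := sq_mul_sq_le_sq_sub_abs_pow_three (add_nonneg hp hs)
    (d := W.q - W.r) (abs_sub_le_iff.2 ⟨by linarith, by linarith⟩)
  have hrs := sq_mul_sq_le_sq_sub_abs_pow_three (add_nonneg hp hq)
    (d := W.r - W.s) (abs_sub_le_iff.2 ⟨by linarith, by linarith⟩)
  have hsq := sq_mul_sq_le_sq_sub_abs_pow_three (add_nonneg hp hr)
    (d := W.s - W.q) (abs_sub_le_iff.2 ⟨by linarith, by linarith⟩)
  rw [inertia_ser]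
  unfold inertia
  linarith

lemma inertia_ser_le {W : TECQuint} (h : W.IsTEC) : inertia (ser W) ≤ inertia W := by
  have := inertia_ser_add_sum_abs_pow_three_le h
  linarith [pow_nonneg (abs_nonneg (W.q - W.r)) 3, pow_nonneg (abs_nonneg (W.r - W.s)) 3,
    pow_nonneg (abs_nonneg (W.s - W.q)) 3]

lemma inertia_pow_three_le_sub_inertia_ser {W : TECQuint} (h : W.IsTEC) :
    inertia W ^ 3 ≤ 3 * (inertia W - inertia (ser W)) ^ 2 := by
  have hloss := inertia_ser_add_sum_abs_pow_three_le h
  have hmean := sum_sq_pow_three_le_three_mul_sum_pow_three_sq (abs_nonneg (W.q - W.r))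
    (abs_nonneg (W.r - W.s)) (abs_nonneg (W.s - W.q))
  simp only [sq_abs] at hmean
  calc inertia W ^ 3 ≤ 3 * (|W.q - W.r| ^ 3 + |W.r - W.s| ^ 3 + |W.s - W.q| ^ 3) ^ 2 := hmean
    _ ≤ 3 * (inertia W - inertia (ser W)) ^ 2 := by gcongr; linarith

lemma inertia_par_le {W : TECQuint} (h : W.IsTEC) : inertia (par W) ≤ inertia W := by
  rw [par_eq_swapEnds_ser_swapEnds, inertia_swapEnds]
  exact inertia_ser_le h.swapEnds

lemma inertia_pow_three_le_sub_inertia_par {W : TECQuint} (h : W.IsTEC) :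
    inertia W ^ 3 ≤ 3 * (inertia W - inertia (par W)) ^ 2 := by
  rw [par_eq_swapEnds_ser_swapEnds, inertia_swapEnds]
  exact inertia_pow_three_le_sub_inertia_ser h.swapEnds

end TECQuint

theorem ultimate_loss_of_inertia (W : TECQuint) (hW : W.IsTEC)
    (Wseq : ℕ → TECQuint) (h0 : Wseq 0 = W)
    (hstep : ∀ n : ℕ, Wseq (n + 1) = ser (Wseq n) ∨ Wseq (n + 1) = par (Wseq n)) :
    ∃ C : ℝ, 0 < C ∧ ∀ n : ℕ, 1 ≤ n → inertia (Wseq n) ≤ C / n := by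
  have hTEC : ∀ n, (Wseq n).IsTEC := by
    intro n
    induction n with
    | zero => exact h0 ▸ hW
    | succ n ih => rcases hstep n with h | h <;> rw [h]; exacts [isTEC_ser ih, isTEC_par ih]
  refine ⟨2 * 3, by norm_num, le_two_mul_div_of_pow_three_le_mul_sq_sub three_pos
    (fun n => inertia_nonneg _) (fun n => ?_) (fun n => ?_)⟩
  · rcases hstep n with h | h <;> rw [h]
    exacts [inertia_ser_le (hTEC n), inertia_par_le (hTEC n)]
  · rcases hstep n with h | h <;> rw [h]
    exacts [inertia_pow_three_le_sub_inertia_ser (hTEC n),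
      inertia_pow_three_le_sub_inertia_par (hTEC n)]
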